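/- arXiv:1206.2020 — 2 statements merged into one kernel-verified Lean document; each statement's English description precedes it below -/
import Mathlib

section
/- Let k ≥ 1 and let α, α' be smooth (k−1)-forms and β, β' smooth k-forms on M. If α ∧ (df/f) + β = α' ∧ (df/f) + β' at every point of M ∖ Z, then the pullbacks to Z agree: i*α = i*α' and i*β = i*β'. (In other words, along Z the summands of a b-de Rham form of the shape α ∧ (df/f) + β are uniquely determined.) -/
open Set
open scoped Manifold Topology

noncomputable section

universe u v

section Core

variable {E : Type u} [NormedAddCommGroup E] [NormedSpace ℝ E]
variable {M : Type v} [TopologicalSpace M] [ChartedSpace E M]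

/-- A pointwise value of a differential form: a (continuous) alternating multilinear map. -/
def IsFormPt {k : ℕ} (a : (Fin k → E) → ℝ) : Prop :=
  ∃ A : E [⋀^Fin k]→L[ℝ] ℝ, ⇑A = a

/-- Local representative of a raw form in the preferred chart at `x₀`; tangent vectors at a
point `x` are represented in the chart at `x` (the identification `TangentSpace 𝓘(ℝ, E) x = E`),
so chart-coordinate vectors get converted by the derivative of the chart inverse. -/
def localRep {k : ℕ} (ω : M → (Fin k → E) → ℝ) (x₀ : M) (y : E) (v : Fin k → E) : ℝ :=
  ω ((chartAt E x₀).symm y) fun i =>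
    mfderiv 𝓘(ℝ, E) 𝓘(ℝ, E) ((chartAt E x₀).symm) y (v i)

/-- Exterior derivative of a raw `k`-form (correct for smooth alternating forms). -/
def extD {k : ℕ} (ω : M → (Fin k → E) → ℝ) (x : M) (v : Fin (k + 1) → E) : ℝ :=
  ∑ i : Fin (k + 1), (-1 : ℝ) ^ (i : ℕ) *
    fderiv ℝ (fun y => localRep ω x y (v ∘ i.succAbove)) (chartAt E x x) (v i)

/-- Smoothness of a raw form on a set: pointwise it is an alternating multilinear form, and all
chart representatives are smooth. -/
def IsSmoothFormOn {k : ℕ} (ω : M → (Fin k → E) → ℝ) (S : Set M) : Prop :=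
  (∀ x ∈ S, IsFormPt (ω x)) ∧
  ∀ (x₀ : M) (v : Fin k → E),
    ContDiffOn ℝ (⊤ : ℕ∞) (fun y => localRep ω x₀ y v)
      ((chartAt E x₀).target ∩ ((chartAt E x₀).symm ⁻¹' S))

def IsSmoothForm {k : ℕ} (ω : M → (Fin k → E) → ℝ) : Prop :=
  IsSmoothFormOn ω univ

def IsClosedFormOn {k : ℕ} (ω : M → (Fin k → E) → ℝ) (S : Set M) : Prop :=
  ∀ x ∈ S, ∀ v : Fin (k + 1) → E, extD ω x v = 0

/-- Wedge product of raw forms (standard determinant convention). -/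
def wedgeRaw {k l : ℕ} (a : (Fin k → E) → ℝ) (b : (Fin l → E) → ℝ)
    (v : Fin (k + l) → E) : ℝ :=
  ((k.factorial * l.factorial : ℕ) : ℝ)⁻¹ *
    ∑ σ : Equiv.Perm (Fin (k + l)), ((Equiv.Perm.sign σ : ℤ) : ℝ) *
      a (fun i => v (σ (Fin.castAdd l i))) * b (fun j => v (σ (Fin.natAdd k j)))

/-- `m`-th wedge power of a 2-form. -/
def wpow (b : (Fin 2 → E) → ℝ) : (m : ℕ) → (Fin (2 * m) → E) → ℝ
  | 0 => fun _ => 1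
  | m + 1 => wedgeRaw (wpow b m) b

/-- The differential of a function, as a raw 1-form. -/
def d0 (f : M → ℝ) : M → (Fin 1 → E) → ℝ :=
  extD (M := M) fun x (_ : Fin 0 → E) => f x

/-- The 1-form `df/f` (with junk value where `f = 0`). -/
def bDlog (f : M → ℝ) (x : M) (v : Fin 1 → E) : ℝ := (f x)⁻¹ * d0 f x v

/-- A tangent vector at `p` is tangent to the level set of `f` if `df_p` kills it. -/
def TangentTo (f : M → ℝ) (p : M) (u : E) : Prop :=
  d0 f p (fun _ => u) = 0

/-- `f` is a defining function: smooth, and `0` is a regular value. -/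
def IsDefining (f : M → ℝ) : Prop :=
  ContMDiff 𝓘(ℝ, E) 𝓘(ℝ, ℝ) (⊤ : ℕ∞) f ∧
  ∀ p, f p = 0 → ∃ u : E, d0 f p (fun _ => u) ≠ 0

/-- The raw 2-form `α ∧ (df/f) + β`. -/
def bForm (f : M → ℝ) (α : M → (Fin 1 → E) → ℝ) (β : M → (Fin 2 → E) → ℝ)
    (x : M) (v : Fin 2 → E) : ℝ :=
  wedgeRaw (α x) (bDlog f x) v + β x v

/-- Encoded b-symplectic form `(α, β)` on `(M, f⁻¹(0))` with defining function `f`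
(on a `2n`-dimensional manifold): `ω = α ∧ df/f + β` is closed on `M ∖ Z` and
nondegenerate there, and `α ∧ β^(n-1) ∧ df` is nonvanishing on `Z`. -/
def EncBSymp (n : ℕ) (f : M → ℝ) (α : M → (Fin 1 → E) → ℝ)
    (β : M → (Fin 2 → E) → ℝ) : Prop :=
  IsSmoothForm α ∧ IsSmoothForm β ∧
  IsClosedFormOn (bForm f α β) {x | f x ≠ 0} ∧
  (∀ x, f x ≠ 0 → ∀ u : E, u ≠ 0 → ∃ w : E, bForm f α β x ![u, w] ≠ 0) ∧
  (∀ x, f x = 0 → ∃ v : Fin (1 + 2 * (n - 1) + 1) → E,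
    wedgeRaw (wedgeRaw (α x) (wpow (β x) (n - 1))) (d0 f x) v ≠ 0)

end Core

section Aux
set_option linter.unusedSectionVars false

variable {E : Type u} [NormedAddCommGroup E] [NormedSpace ℝ E]
variable {M : Type v} [TopologicalSpace M] [ChartedSpace E M]

theorem d0_apply (f : M → ℝ) (x : M) (v : Fin 1 → E) :
    d0 (E := E) f x v
      = fderiv ℝ (fun y => f ((chartAt E x).symm y)) (chartAt E x x) (v 0) := by
  simp [d0, extD, localRep]

theorem wedgeRaw_sub_left {k l : ℕ} (a a' : (Fin k → E) → ℝ) (b : (Fin l → E) → ℝ)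
    (v : Fin (k + l) → E) :
    wedgeRaw (fun w => a w - a' w) b v = wedgeRaw a b v - wedgeRaw a' b v := by
  simp only [wedgeRaw, ← mul_sub, ← Finset.sum_sub_distrib]
  congr 1
  exact Finset.sum_congr rfl fun σ _ => by ring

theorem wedgeRaw_mul_right {k l : ℕ} (a : (Fin k → E) → ℝ) (b : (Fin l → E) → ℝ) (t : ℝ)
    (v : Fin (k + l) → E) :
    wedgeRaw a (fun w => t * b w) v = t * wedgeRaw a b v := by
  simp only [wedgeRaw]
  have h : ∀ (g h : Equiv.Perm (Fin (k + l)) → ℝ),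
      (∑ σ : Equiv.Perm (Fin (k + l)), g σ * (t * h σ))
        = t * ∑ σ : Equiv.Perm (Fin (k + l)), g σ * h σ := by
    intro g h
    rw [Finset.mul_sum]
    exact Finset.sum_congr rfl fun σ _ => by ring
  rw [h, mul_left_comm]

theorem wedgeRaw_comp {k l : ℕ} (a : (Fin k → E) → ℝ) (b : (Fin l → E) → ℝ)
    (g : E → E) (v : Fin (k + l) → E) :
    wedgeRaw a b (fun i => g (v i))
      = wedgeRaw (fun w => a fun i => g (w i)) (fun w => b fun i => g (w i)) v := rfl

end Aux
section Aux2
set_option linter.unusedSectionVars false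

variable {E : Type u} [NormedAddCommGroup E] [NormedSpace ℝ E]

theorem natAdd_zero_eq_last (m : ℕ) : Fin.natAdd m (0 : Fin 1) = Fin.last m := by
  ext; simp

theorem wedge_extract {m : ℕ} (A : E [⋀^Fin m]→L[ℝ] ℝ) (ψ : E → ℝ) (v : Fin m → E) (u : E)
    (hψ : ∀ i, ψ (v i) = 0) :
    wedgeRaw (E := E) ⇑A (fun t => ψ (t 0)) (Fin.snoc v u) = A v * ψ u := by
  have hs : ∀ s : ℤˣ, ((s : ℤ) : ℝ) * ((s : ℤ) : ℝ) = 1 := by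
    intro s; rcases Int.units_eq_one_or s with h | h <;> simp [h]
  set w : Fin (m + 1) → E := Fin.snoc v u with hw
  set Φ : Fin (m + 1) × Equiv.Perm (Fin m) ≃ Equiv.Perm (Fin (m + 1)) :=
    Equiv.Perm.decomposeFin.symm.trans (Fin.revPerm.permCongr) with hΦ
  have hΦ_apply : ∀ (j : Fin (m + 1)) (τ : Equiv.Perm (Fin m)) (x : Fin (m + 1)),
      Φ (j, τ) x = Fin.rev (Equiv.Perm.decomposeFin.symm (j, τ) (Fin.rev x)) := by
    intro j τ x
    rfl
  have key : ∀ (j : Fin (m + 1)) (τ : Equiv.Perm (Fin m)),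
      Φ (j, τ) (Fin.natAdd m (0 : Fin 1)) = Fin.rev j := by
    intro j τ
    rw [natAdd_zero_eq_last, hΦ_apply, Fin.rev_last, Equiv.Perm.decomposeFin_symm_apply_zero]
  unfold wedgeRaw
  beta_reduce
  rw [← Equiv.sum_comp Φ, Fintype.sum_prod_type]
  rw [Finset.sum_eq_single (0 : Fin (m + 1))]
  · -- j = 0 case
    have hlast : ∀ τ : Equiv.Perm (Fin m), w (Φ (0, τ) (Fin.natAdd m (0 : Fin 1))) = u := by
      intro τ
      rw [key, Fin.rev_zero, hw, Fin.snoc_last]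
    have hA : ∀ τ : Equiv.Perm (Fin m),
        (A fun i => w (Φ (0, τ) (Fin.castAdd 1 i))) = ((Equiv.Perm.sign τ : ℤ) : ℝ) * A v := by
      intro τ
      have harg : ∀ i : Fin m, w (Φ (0, τ) (Fin.castAdd 1 i))
          = v (Fin.revPerm.permCongr τ i) := by
        intro i
        have h1 : Fin.castAdd 1 i = Fin.castSucc i := rfl
        have h2 : (Fin.revPerm.permCongr τ) i = Fin.rev (τ (Fin.rev i)) := rfl
        rw [h1, h2, hΦ_apply, Fin.rev_castSucc, Equiv.Perm.decomposeFin_symm_apply_succ,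
          Equiv.swap_self, Equiv.refl_apply, Fin.rev_succ, hw, Fin.snoc_castSucc]
      have harg' : (fun i => w (Φ (0, τ) (Fin.castAdd 1 i)))
          = v ∘ (Fin.revPerm.permCongr τ) := by
        funext i; exact harg i
      rw [harg']
      have hmp := A.toAlternatingMap.map_perm v (Fin.revPerm.permCongr τ)
      rw [show (⇑A.toAlternatingMap) = ⇑A from rfl] at hmp
      rw [hmp, Equiv.Perm.sign_permCongr]
      simp [Units.smul_def, zsmul_eq_mul]
    have hsign : ∀ τ : Equiv.Perm (Fin m),
        ((Equiv.Perm.sign (Φ (0, τ)) : ℤ) : ℝ) = ((Equiv.Perm.sign τ : ℤ) : ℝ) := by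
      intro τ
      have h3 : Φ (0, τ) = Fin.revPerm.permCongr (Equiv.Perm.decomposeFin.symm (0, τ)) := rfl
      rw [h3, Equiv.Perm.sign_permCongr, Equiv.Perm.decomposeFin.symm_sign]
      simp
    have hterm : ∀ τ : Equiv.Perm (Fin m),
        ((Equiv.Perm.sign (Φ (0, τ)) : ℤ) : ℝ) * (A fun i => w (Φ (0, τ) (Fin.castAdd 1 i)))
          * ψ (w (Φ (0, τ) (Fin.natAdd m (0 : Fin 1))))
        = A v * ψ u := by
      intro τ
      rw [hA, hsign, hlast, ← mul_assoc, hs (Equiv.Perm.sign τ), one_mul]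
    rw [Finset.sum_congr rfl fun τ _ => hterm τ]
    rw [Finset.sum_const, Finset.card_univ, Fintype.card_perm]
    have hfac : ((m.factorial * (1 : ℕ).factorial : ℕ) : ℝ) ≠ 0 := by
      positivity
    rw [nsmul_eq_mul]
    rw [Fintype.card_fin]
    rw [Nat.factorial_one, mul_one] at hfac ⊢
    rw [← mul_assoc, inv_mul_cancel₀ hfac, one_mul]
  · -- j ≠ 0 terms vanish
    intro j _ hj
    apply Finset.sum_eq_zero
    intro τ _
    have hne : Φ (j, τ) (Fin.natAdd m (0 : Fin 1)) ≠ Fin.last m := by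
      rw [key]
      intro h
      apply hj
      have := congrArg Fin.rev h
      rwa [Fin.rev_rev, Fin.rev_last] at this
    obtain ⟨i, hi⟩ := Fin.exists_castSucc_eq.2 hne
    rw [← hi, hw, Fin.snoc_castSucc, hψ i, mul_zero]
  · intro h; exact absurd (Finset.mem_univ _) h

end Aux2
section Aux3
set_option linter.unusedSectionVars false

variable {E : Type u} [NormedAddCommGroup E] [NormedSpace ℝ E]
variable {M : Type v} [TopologicalSpace M] [ChartedSpace E M]
variable [IsManifold 𝓘(ℝ, E) (⊤ : ℕ∞) M]

/-- The chart representative of a `ContMDiff` function is `ContDiffOn` on the chart target. -/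
theorem frep_contDiffOn {f : M → ℝ} (hf : ContMDiff 𝓘(ℝ, E) 𝓘(ℝ, ℝ) (⊤ : ℕ∞) f) (x : M) :
    ContDiffOn ℝ ((⊤ : ℕ∞) : WithTop ℕ∞) (fun y => f ((chartAt E x).symm y)) (chartAt E x).target := by
  have h := (contMDiff_iff.1 hf).2 x (f x)
  simp only [extChartAt_model_space_eq_id, PartialEquiv.refl_coe, PartialEquiv.refl_symm,
    PartialEquiv.refl_source, preimage_univ, inter_univ, CompTriple.comp_eq, id_eq,
    Function.comp_def, extChartAt_coe_symm, extChartAt_target, modelWithCornersSelf_coe,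
    modelWithCornersSelf_coe_symm, Set.range_id, preimage_id_eq] at h
  simpa using h

theorem transition_contDiffOn (x₀ x₁ : M) :
    ContDiffOn ℝ ((⊤ : ℕ∞) : WithTop ℕ∞) (fun z => chartAt E x₁ ((chartAt E x₀).symm z))
      ((chartAt E x₀).target ∩ (chartAt E x₀).symm ⁻¹' (chartAt E x₁).source) := by
  have hcomp := (HasGroupoid.compatible (G := contDiffGroupoid (⊤ : ℕ∞) 𝓘(ℝ, E))
    (chart_mem_atlas E x₀) (chart_mem_atlas E x₁))
  have h := (mem_groupoid_of_pregroupoid.1 hcomp).1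
  simp only [contDiffPregroupoid, modelWithCornersSelf_coe, modelWithCornersSelf_coe_symm,
    Function.comp_def, id_eq, preimage_id_eq, Set.range_id, inter_univ,
    OpenPartialHomeomorph.trans_source, OpenPartialHomeomorph.symm_source,
    OpenPartialHomeomorph.coe_trans, OpenPartialHomeomorph.symm_symm] at h
  exact h.mono fun z hz => hz

theorem transition_open (x₀ x₁ : M) :
    IsOpen ((chartAt E x₀).target ∩ (chartAt E x₀).symm ⁻¹' (chartAt E x₁).source) :=
  (chartAt E x₀).symm.isOpen_inter_preimage (chartAt E x₁).open_source

theorem mfderiv_chart_symm_eq {p : M} {y : E} (hy : y ∈ (chartAt E p).target) :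
    mfderiv 𝓘(ℝ, E) 𝓘(ℝ, E) (chartAt E p).symm y
      = fderiv ℝ (fun z => chartAt E ((chartAt E p).symm y) ((chartAt E p).symm z)) y := by
  rw [(mdifferentiableAt_atlas_symm (chart_mem_atlas E p) hy).mfderiv]
  simp only [writtenInExtChartAt, extChartAt_model_space_eq_id, PartialEquiv.refl_coe,
    PartialEquiv.refl_symm, modelWithCornersSelf_coe, Set.range_id, fderivWithin_univ,
    extChartAt_coe, modelWithCornersSelf_coe_symm, Function.comp_def, id_eq,
    OpenPartialHomeomorph.coe_coe]
  rfl

theorem mfderiv_chart_symm_center (p : M) (w : E) :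
    mfderiv 𝓘(ℝ, E) 𝓘(ℝ, E) (chartAt E p).symm (chartAt E p p) w = w := by
  have hy : chartAt E p p ∈ (chartAt E p).target := (chartAt E p).map_source (mem_chart_source E p)
  rw [mfderiv_chart_symm_eq hy]
  have hpp : (chartAt E p).symm (chartAt E p p) = p :=
    (chartAt E p).left_inv (mem_chart_source E p)
  have hev : (fun z => chartAt E ((chartAt E p).symm (chartAt E p p)) ((chartAt E p).symm z))
      =ᶠ[nhds (chartAt E p p)] id := by
    filter_upwards [(chartAt E p).open_target.mem_nhds hy] with z hz
    rw [hpp]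
    exact (chartAt E p).right_inv hz
  rw [hev.fderiv_eq, fderiv_id]
  rfl

theorem localRep_center {k : ℕ} (ω : M → (Fin k → E) → ℝ) (p : M) (v : Fin k → E) :
    localRep ω p (chartAt E p p) v = ω p v := by
  unfold localRep
  have hpp : (chartAt E p).symm (chartAt E p p) = p :=
    (chartAt E p).left_inv (mem_chart_source E p)
  simp only [mfderiv_chart_symm_center, hpp]

end Aux3
section Aux4
set_option linter.unusedSectionVars false

variable {E : Type u} [NormedAddCommGroup E] [NormedSpace ℝ E]
variable {M : Type v} [TopologicalSpace M] [ChartedSpace E M]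
variable [IsManifold 𝓘(ℝ, E) (⊤ : ℕ∞) M]

/-- Chart-invariance of `d0`: the local representative of `d0 f` in the chart at `p`
is the honest differential of the chart representative of `f`. -/
theorem localRep_d0 {f : M → ℝ} (hf : ContMDiff 𝓘(ℝ, E) 𝓘(ℝ, ℝ) (⊤ : ℕ∞) f) (p : M) {y : E}
    (hy : y ∈ (chartAt E p).target) (w : Fin 1 → E) :
    localRep (d0 (E := E) f) p y w
      = fderiv ℝ (fun z => f ((chartAt E p).symm z)) y (w 0) := by
  set c := chartAt E p with hc
  set x := c.symm y with hxdef
  set c' := chartAt E x with hc'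
  have hx : x ∈ c.source := c.map_target hy
  have hx' : x ∈ c'.source := mem_chart_source E x
  have hrep : localRep (d0 (E := E) f) p y w
      = d0 (E := E) f x (fun i => mfderiv 𝓘(ℝ, E) 𝓘(ℝ, E) c.symm y (w i)) := rfl
  refine hrep.trans ((d0_apply f x _).trans ?_)
  have hL : mfderiv 𝓘(ℝ, E) 𝓘(ℝ, E) c.symm y
      = fderiv ℝ (fun z => c' (c.symm z)) y := mfderiv_chart_symm_eq hy
  rw [hL]
  have h1n : (1 : WithTop ℕ∞) ≤ ((⊤ : ℕ∞) : WithTop ℕ∞) := by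
    exact_mod_cast (le_top : (1 : ℕ∞) ≤ ⊤)
  -- differentiability facts
  have h1 : DifferentiableAt ℝ (fun z => f (c'.symm z)) (c' x) := by
    have := (frep_contDiffOn hf x).differentiableOn (by simp)
    exact (this.differentiableAt (c'.open_target.mem_nhds (c'.map_source hx')))
  have hyo : y ∈ c.target ∩ c.symm ⁻¹' c'.source := ⟨hy, hx'⟩
  have h2 : DifferentiableAt ℝ (fun z => c' (c.symm z)) y := by
    have := (transition_contDiffOn (E := E) p x).differentiableOn (by simp)
    exact this.differentiableAt ((transition_open p x).mem_nhds hyo)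
  have hev : (fun z => f (c.symm z)) =ᶠ[nhds y]
      (fun z => f (c'.symm (c' (c.symm z)))) := by
    filter_upwards [(transition_open p x).mem_nhds hyo] with z hz
    rw [c'.left_inv hz.2]
  have hcomp : fderiv ℝ (fun z => f (c.symm z)) y
      = (fderiv ℝ (fun z => f (c'.symm z)) (c' x)).comp
          (fderiv ℝ (fun z => c' (c.symm z)) y) := by
    rw [hev.fderiv_eq]
    exact fderiv_comp (𝕜 := ℝ) y (f := fun z => c' (c.symm z))
      (g := fun z => f (c'.symm z)) h1 h2
  rw [hcomp]
  rfl

end Aux4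
section Aux5
set_option linter.unusedSectionVars false

variable {E : Type u} [NormedAddCommGroup E] [NormedSpace ℝ E]
variable {M : Type v} [TopologicalSpace M] [ChartedSpace E M]
variable [IsManifold 𝓘(ℝ, E) (⊤ : ℕ∞) M]

theorem one_le_inf : (1 : WithTop ℕ∞) ≤ ((⊤ : ℕ∞) : WithTop ℕ∞) := by
  exact_mod_cast (le_top : (1 : ℕ∞) ≤ ⊤)

/-- On the zero set of a defining function, a relation
`γ ∧ df = f·δ` away from the zero set forces `γ ∧ df = 0` on the zero set. -/
theorem stepA {f : M → ℝ} (hf : IsDefining (E := E) f) {m : ℕ}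
    {γ : M → (Fin m → E) → ℝ} {δ : M → (Fin (m + 1) → E) → ℝ}
    (hγsm : ∀ (x₀ : M) (v : Fin m → E),
      ContDiffOn ℝ (⊤ : ℕ∞) (fun y => localRep γ x₀ y v) (chartAt E x₀).target)
    (hδsm : ∀ (x₀ : M) (v : Fin (m + 1) → E),
      ContDiffOn ℝ (⊤ : ℕ∞) (fun y => localRep δ x₀ y v) (chartAt E x₀).target)
    (hKI : ∀ x, f x ≠ 0 → ∀ w : Fin (m + 1) → E,
      wedgeRaw (γ x) (d0 (E := E) f x) w = f x * δ x w)
    (q : M) (hq : f q = 0) (w : Fin (m + 1) → E) :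
    wedgeRaw (γ q) (d0 (E := E) f q) w = 0 := by
  set c := chartAt E q with hc
  set y₀ : E := c q with hy₀def
  have hy₀ : y₀ ∈ c.target := c.map_source (mem_chart_source E q)
  set F : E → ℝ := fun z => f (c.symm z) with hFdef
  have hF : ContDiffOn ℝ ((⊤ : ℕ∞) : WithTop ℕ∞) F c.target := frep_contDiffOn hf.1 q
  have hFd : DifferentiableAt ℝ F y₀ :=
    (hF.differentiableOn (by simp)).differentiableAt (c.open_target.mem_nhds hy₀)
  have hFy₀ : F y₀ = 0 := by
    rw [hFdef]
    simp only [hy₀def, c.left_inv (mem_chart_source E q)]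
    exact hq
  obtain ⟨u, hu⟩ := hf.2 q hq
  have hu' : fderiv ℝ F y₀ u ≠ 0 := by
    rw [d0_apply] at hu
    exact hu
  -- the transported identity
  set Wt : E → ℝ := fun y =>
    wedgeRaw (fun t => localRep γ q y t) (fun t => fderiv ℝ F y (t 0)) w with hWtdef
  have hWt_eq : ∀ y ∈ c.target, F y ≠ 0 →
      Wt y = F y * localRep δ q y w := by
    intro y hy hFy
    have h1 : Wt y = wedgeRaw (fun t => localRep γ q y t)
        (fun t => localRep (d0 (E := E) f) q y t) w := by
      show wedgeRaw (fun t => localRep γ q y t) (fun t => fderiv ℝ F y (t 0)) w = _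
      congr 1
      funext t
      rw [localRep_d0 hf.1 q hy t]
    have h2 : wedgeRaw (fun t => localRep γ q y t)
        (fun t => localRep (d0 (E := E) f) q y t) w
        = wedgeRaw (γ (c.symm y)) (d0 (E := E) f (c.symm y))
            (fun i => mfderiv 𝓘(ℝ, E) 𝓘(ℝ, E) c.symm y (w i)) := rfl
    rw [h1, h2]; exact hKI _ hFy _
  -- continuity of Wt on the chart target
  have hQcont : ∀ z : E, ContinuousOn (fun y => fderiv ℝ F y z) c.target := by
    intro z
    have h1 : ContinuousOn (fderiv ℝ F) c.target :=
      hF.continuousOn_fderiv_of_isOpen c.open_target one_le_inf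
    exact ((ContinuousLinearMap.apply ℝ ℝ z).continuous).comp_continuousOn h1
  have hWtcont : ContinuousOn Wt c.target := by
    rw [hWtdef]
    simp only [wedgeRaw]
    apply ContinuousOn.mul continuousOn_const
    apply continuousOn_finset_sum
    intro σ _
    exact (continuousOn_const.mul
      ((hγsm q _).continuousOn)).mul (hQcont _)
  have hRδcont : ContinuousOn (fun y => localRep δ q y w) c.target :=
    (hδsm q w).continuousOn
  -- the set where f ≠ 0, in the chart
  set S : Set E := c.target ∩ {y | F y ≠ 0} with hSdef
  -- y₀ is in the closure of S
  have hS : y₀ ∈ closure S := by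
    have hg : HasDerivAt (fun t : ℝ => F (y₀ + t • u)) (fderiv ℝ F y₀ u) 0 := by
      have h₂ : HasDerivAt (fun t : ℝ => y₀ + t • u) u 0 := by
        simpa using ((hasDerivAt_id (0 : ℝ)).smul_const u).const_add y₀
      have h₁ : HasFDerivAt F (fderiv ℝ F y₀) ((fun t : ℝ => y₀ + t • u) 0) := by
        simpa using hFd.hasFDerivAt
      have := h₁.comp_hasDerivAt (0 : ℝ) h₂
      exact this
    rw [hasDerivAt_iff_tendsto_slope] at hg
    have hne : ∀ᶠ t in nhdsWithin (0 : ℝ) {0}ᶜ, slope (fun t : ℝ => F (y₀ + t • u)) 0 t ≠ 0 :=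
      hg (isOpen_ne.mem_nhds hu')
    have hmem : ∀ᶠ t in nhdsWithin (0 : ℝ) {0}ᶜ, y₀ + t • u ∈ c.target := by
      apply Filter.Eventually.filter_mono nhdsWithin_le_nhds
      have hcont : Continuous (fun t : ℝ => y₀ + t • u) :=
        continuous_const.add (continuous_id.smul continuous_const)
      have hmem0 : c.target ∈ nhds (y₀ + (0 : ℝ) • u) := by
        simpa using c.open_target.mem_nhds hy₀
      exact hcont.continuousAt.preimage_mem_nhds hmem0
    have hSmem : ∀ᶠ t in nhdsWithin (0 : ℝ) {0}ᶜ, y₀ + t • u ∈ S := by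
      filter_upwards [hne, hmem] with t ht htm
      refine ⟨htm, ?_⟩
      intro h0
      apply ht
      rw [slope_def_field]
      simp [h0, hFy₀]
    have htend : Filter.Tendsto (fun t : ℝ => y₀ + t • u) (nhdsWithin (0 : ℝ) {0}ᶜ) (nhds y₀) := by
      apply Filter.Tendsto.mono_left _ nhdsWithin_le_nhds
      have hcont : Continuous (fun t : ℝ => y₀ + t • u) :=
        continuous_const.add (continuous_id.smul continuous_const)
      have := hcont.continuousAt (x := (0 : ℝ))
      simpa using this.tendsto
    exact mem_closure_of_tendsto htend hSmem
  have hNB : (nhdsWithin y₀ S).NeBot := mem_closure_iff_nhdsWithin_neBot.1 hS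
  -- unique limits
  have h₁ : Filter.Tendsto Wt (nhdsWithin y₀ S) (nhds (Wt y₀)) :=
    ((hWtcont.continuousAt (c.open_target.mem_nhds hy₀)).tendsto).mono_left nhdsWithin_le_nhds
  have h₂ : Filter.Tendsto (fun y => F y * localRep δ q y w) (nhdsWithin y₀ S)
      (nhds (F y₀ * localRep δ q y₀ w)) := by
    have hFc : ContinuousAt F y₀ := hFd.continuousAt
    have hRc : ContinuousAt (fun y => localRep δ q y w) y₀ :=
      hRδcont.continuousAt (c.open_target.mem_nhds hy₀)
    exact ((hFc.mul hRc).tendsto).mono_left nhdsWithin_le_nhds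
  have h₃ : Filter.Tendsto Wt (nhdsWithin y₀ S) (nhds (F y₀ * localRep δ q y₀ w)) := by
    apply h₂.congr'
    filter_upwards [self_mem_nhdsWithin] with y hy
    exact (hWt_eq y hy.1 hy.2).symm
  have hWt0 : Wt y₀ = 0 := by
    have := tendsto_nhds_unique h₁ h₃
    rw [this, hFy₀, zero_mul]
  -- identify Wt y₀ with the wedge at q
  have hWc : Wt y₀ = wedgeRaw (γ q) (d0 (E := E) f q) w := by
    show wedgeRaw (fun t => localRep γ q y₀ t) (fun t => fderiv ℝ F y₀ (t 0)) w = _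
    have hb : (fun t : Fin 1 → E => fderiv ℝ F y₀ (t 0))
        = fun t => localRep (d0 (E := E) f) q y₀ t := by
      funext t
      rw [localRep_d0 hf.1 q hy₀ t]
    rw [hb]
    have hγc : (fun t => localRep γ q y₀ t) = γ q := by
      funext t; exact localRep_center γ q t
    have hdc : (fun t => localRep (d0 (E := E) f) q y₀ t) = d0 (E := E) f q := by
      funext t; exact localRep_center (d0 (E := E) f) q t
    rw [hγc, hdc]
  rw [← hWc, hWt0]

end Aux5

/-- Along `Z`, the summands of a b-de Rham form `α ∧ (df/f) + β` are uniquely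
determined: if two such decompositions agree on `M ∖ Z`, the pullbacks to `Z` agree. -/
theorem statement0
    {E : Type u} [NormedAddCommGroup E] [NormedSpace ℝ E] [FiniteDimensional ℝ E]
    {M : Type v} [TopologicalSpace M] [ChartedSpace E M]
    [IsManifold 𝓘(ℝ, E) (⊤ : ℕ∞) M] [T2Space M]
    (f : M → ℝ) (hf : IsDefining (E := E) f)
    (m : ℕ)
    (α α' : M → (Fin m → E) → ℝ) (β β' : M → (Fin (m + 1) → E) → ℝ)
    (hα : IsSmoothForm α) (hα' : IsSmoothForm α')
    (hβ : IsSmoothForm β) (hβ' : IsSmoothForm β')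
    (heq : ∀ x, f x ≠ 0 → ∀ v : Fin (m + 1) → E,
      wedgeRaw (α x) (bDlog f x) v + β x v = wedgeRaw (α' x) (bDlog f x) v + β' x v) :
    (∀ p, f p = 0 → ∀ v : Fin m → E, (∀ i, TangentTo f p (v i)) → α p v = α' p v) ∧
    (∀ p, f p = 0 → ∀ v : Fin (m + 1) → E, (∀ i, TangentTo f p (v i)) → β p v = β' p v) := by
  classical
  set γ : M → (Fin m → E) → ℝ := fun x w => α x w - α' x w with hγdef
  set δ : M → (Fin (m + 1) → E) → ℝ := fun x w => β' x w - β x w with hδdef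
  -- chart smoothness of the representatives
  have hγsm : ∀ (x₀ : M) (v : Fin m → E),
      ContDiffOn ℝ (⊤ : ℕ∞) (fun y => localRep γ x₀ y v) (chartAt E x₀).target := by
    intro x₀ v
    have h1 := hα.2 x₀ v
    have h2 := hα'.2 x₀ v
    rw [preimage_univ, inter_univ] at h1 h2
    exact h1.sub h2
  have hδsm : ∀ (x₀ : M) (v : Fin (m + 1) → E),
      ContDiffOn ℝ (⊤ : ℕ∞) (fun y => localRep δ x₀ y v) (chartAt E x₀).target := by
    intro x₀ v
    have h1 := hβ.2 x₀ v
    have h2 := hβ'.2 x₀ v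
    rw [preimage_univ, inter_univ] at h1 h2
    exact h2.sub h1
  -- the key identity away from the zero set
  have hKI : ∀ x, f x ≠ 0 → ∀ w : Fin (m + 1) → E,
      wedgeRaw (γ x) (d0 (E := E) f x) w = f x * δ x w := by
    intro x hx w
    have h0 := heq x hx w
    have h1 : wedgeRaw (γ x) (bDlog (E := E) f x) w = δ x w := by
      have hs := wedgeRaw_sub_left (α x) (α' x) (bDlog (E := E) f x) w
      have : wedgeRaw (γ x) (bDlog (E := E) f x) w
          = wedgeRaw (fun t => α x t - α' x t) (bDlog (E := E) f x) w := rfl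
      rw [this, hs]
      show _ = β' x w - β x w
      linarith
    have h2 : d0 (E := E) f x = fun t => f x * bDlog (E := E) f x t := by
      funext t
      rw [bDlog]
      field_simp
    rw [h2, wedgeRaw_mul_right, h1]
  -- Part 1
  have part1 : ∀ p, f p = 0 → ∀ v : Fin m → E,
      (∀ i, TangentTo (E := E) f p (v i)) → α p v = α' p v := by
    intro p hp v hv
    obtain ⟨u, hu⟩ := hf.2 p hp
    have hA := stepA hf hγsm hδsm hKI p hp (Fin.snoc v u)
    obtain ⟨Aα, hAα⟩ := hα.1 p (mem_univ p)
    obtain ⟨Aα', hAα'⟩ := hα'.1 p (mem_univ p)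
    set A : E [⋀^Fin m]→L[ℝ] ℝ := Aα - Aα' with hAdef
    have hAcoe : ⇑A = γ p := by
      funext t
      show Aα t - Aα' t = α p t - α' p t
      rw [hAα, hAα']
    set ψ : E → ℝ := fun e => d0 (E := E) f p (fun _ => e) with hψdef
    have hψd0 : d0 (E := E) f p = fun t => ψ (t 0) := by
      funext t
      show d0 (E := E) f p t = d0 (E := E) f p (fun _ => t 0)
      congr 1
      funext i
      rw [Subsingleton.elim i 0]
    rw [← hAcoe, hψd0] at hA
    rw [wedge_extract A ψ v u (fun i => hv i)] at hA
    have hψu : ψ u ≠ 0 := hu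
    have hAv : A v = 0 := by
      rcases mul_eq_zero.1 hA with h | h
      · exact h
      · exact absurd h hψu
    have : γ p v = 0 := by rw [← hAcoe]; exact hAv
    have : α p v - α' p v = 0 := this
    linarith
  refine ⟨part1, ?_⟩
  -- Part 2
  intro p hp v hv
  set c := chartAt E p with hc
  set y₀ : E := c p with hy₀def
  have hy₀ : y₀ ∈ c.target := c.map_source (mem_chart_source E p)
  set F : E → ℝ := fun z => f (c.symm z) with hFdef
  have hF : ContDiffOn ℝ ((⊤ : ℕ∞) : WithTop ℕ∞) F c.target := frep_contDiffOn hf.1 p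
  have hFd : DifferentiableAt ℝ F y₀ :=
    (hF.differentiableOn (by simp)).differentiableAt (c.open_target.mem_nhds hy₀)
  have hFy₀ : F y₀ = 0 := by
    rw [hFdef]
    simp only [hy₀def, c.left_inv (mem_chart_source E p)]
    exact hp
  obtain ⟨u, hu⟩ := hf.2 p hp
  have hu' : fderiv ℝ F y₀ u ≠ 0 := by
    rw [d0_apply] at hu
    exact hu
  -- tangency in the chart
  have htang : ∀ i, fderiv ℝ F y₀ (v i) = 0 := by
    intro i
    have := hv i
    rw [TangentTo, d0_apply] at this
    exact this
  -- the pieces of the wedge sum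
  set P : Equiv.Perm (Fin (m + 1)) → E → ℝ :=
    fun σ y => localRep γ p y (fun i => v (σ (Fin.castAdd 1 i))) with hPdef
  set Q : Equiv.Perm (Fin (m + 1)) → E → ℝ :=
    fun σ y => fderiv ℝ F y (v (σ (Fin.natAdd m (0 : Fin 1)))) with hQdef
  set Rδ : E → ℝ := fun y => localRep δ p y v with hRδdef
  set Wt : E → ℝ := fun y => ((m.factorial * (1 : ℕ).factorial : ℕ) : ℝ)⁻¹ *
    ∑ σ : Equiv.Perm (Fin (m + 1)), ((Equiv.Perm.sign σ : ℤ) : ℝ) * P σ y * Q σ y with hWtdef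
  -- the identity Wt = F * Rδ on the chart target
  have hid : ∀ y ∈ c.target, Wt y = F y * Rδ y := by
    intro y hy
    have hterm : ∀ σ : Equiv.Perm (Fin (m + 1)),
        ((Equiv.Perm.sign σ : ℤ) : ℝ) * P σ y * Q σ y
          = ((Equiv.Perm.sign σ : ℤ) : ℝ)
            * (localRep γ p y fun i => v (σ (Fin.castAdd 1 i)))
            * (localRep (d0 (E := E) f) p y fun j => v (σ (Fin.natAdd m j))) := by
      intro σ
      rw [localRep_d0 hf.1 p hy]
    have hWd : Wt y = wedgeRaw (fun t => localRep γ p y t)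
        (fun t => localRep (d0 (E := E) f) p y t) v := by
      rw [hWtdef]
      show (_ : ℝ) * _ = _
      rw [Finset.sum_congr rfl fun σ _ => hterm σ]
      rfl
    by_cases hFy : F y = 0
    · rw [hWd, hFy, zero_mul]
      have hstep := stepA hf hγsm hδsm hKI (c.symm y) hFy
        (fun i => mfderiv 𝓘(ℝ, E) 𝓘(ℝ, E) c.symm y (v i))
      exact hstep
    · rw [hWd]
      have h2 : wedgeRaw (fun t => localRep γ p y t)
          (fun t => localRep (d0 (E := E) f) p y t) v
          = wedgeRaw (γ (c.symm y)) (d0 (E := E) f (c.symm y))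
              (fun i => mfderiv 𝓘(ℝ, E) 𝓘(ℝ, E) c.symm y (v i)) := rfl
      rw [h2]; exact hKI _ hFy _
  -- differentiability of the pieces at y₀
  have hPd : ∀ σ, DifferentiableAt ℝ (P σ) y₀ := by
    intro σ
    exact ((hγsm p _).differentiableOn (by simp)).differentiableAt
      (c.open_target.mem_nhds hy₀)
  have hQd : ∀ σ, DifferentiableAt ℝ (Q σ) y₀ := by
    intro σ
    have hcd : ContDiffOn ℝ 1 (fderiv ℝ F) c.target :=
      hF.fderiv_of_isOpen c.open_target (by norm_cast)
    have hd : DifferentiableAt ℝ (fderiv ℝ F) y₀ :=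
      (hcd.differentiableOn one_ne_zero).differentiableAt (c.open_target.mem_nhds hy₀)
    exact ((ContinuousLinearMap.apply ℝ ℝ (v (σ (Fin.natAdd m (0 : Fin 1))))).differentiable.differentiableAt).comp y₀ hd
  have hRd : DifferentiableAt ℝ Rδ y₀ :=
    ((hδsm p v).differentiableOn (by simp)).differentiableAt (c.open_target.mem_nhds hy₀)
  -- values at y₀
  have hP0 : ∀ σ, P σ y₀ = 0 := by
    intro σ
    show localRep γ p y₀ _ = 0
    rw [hy₀def, localRep_center]
    have := part1 p hp (fun i => v (σ (Fin.castAdd 1 i))) (fun i => hv _)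
    show α p _ - α' p _ = 0
    linarith
  have hQ0 : ∀ σ, Q σ y₀ = 0 := fun σ => htang _
  -- derivatives agree
  have hev : Wt =ᶠ[nhds y₀] (fun y => F y * Rδ y) :=
    Filter.eventuallyEq_of_mem (c.open_target.mem_nhds hy₀) (fun y hy => hid y hy)
  have hfd : fderiv ℝ Wt y₀ = fderiv ℝ (fun y => F y * Rδ y) y₀ := hev.fderiv_eq
  -- RHS derivative
  have hrhs : fderiv ℝ (fun y => F y * Rδ y) y₀ u = Rδ y₀ * fderiv ℝ F y₀ u := by
    rw [fderiv_fun_mul hFd hRd, hFy₀]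
    simp
  -- LHS derivative is zero
  have hlhs : fderiv ℝ Wt y₀ u = 0 := by
    have hsum : ∀ σ : Equiv.Perm (Fin (m + 1)),
        DifferentiableAt ℝ (fun y => ((Equiv.Perm.sign σ : ℤ) : ℝ) * P σ y * Q σ y) y₀ :=
      fun σ => (((hPd σ).const_mul _).mul (hQd σ))
    have h1 : fderiv ℝ Wt y₀
        = ((m.factorial * (1 : ℕ).factorial : ℕ) : ℝ)⁻¹ •
          fderiv ℝ (fun y => ∑ σ : Equiv.Perm (Fin (m + 1)),
            ((Equiv.Perm.sign σ : ℤ) : ℝ) * P σ y * Q σ y) y₀ := by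
      rw [hWtdef]
      exact fderiv_const_mul (DifferentiableAt.fun_sum fun σ _ => hsum σ) _
    have h2 : fderiv ℝ (fun y => ∑ σ : Equiv.Perm (Fin (m + 1)),
        ((Equiv.Perm.sign σ : ℤ) : ℝ) * P σ y * Q σ y) y₀
        = ∑ σ : Equiv.Perm (Fin (m + 1)),
          fderiv ℝ (fun y => ((Equiv.Perm.sign σ : ℤ) : ℝ) * P σ y * Q σ y) y₀ :=
      fderiv_fun_sum fun σ _ => hsum σ
    have h3 : ∀ σ : Equiv.Perm (Fin (m + 1)),
        fderiv ℝ (fun y => ((Equiv.Perm.sign σ : ℤ) : ℝ) * P σ y * Q σ y) y₀ u = 0 := by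
      intro σ
      rw [fderiv_fun_mul ((hPd σ).const_mul _) (hQd σ)]
      have hcP : fderiv ℝ (fun y => ((Equiv.Perm.sign σ : ℤ) : ℝ) * P σ y) y₀
          = ((Equiv.Perm.sign σ : ℤ) : ℝ) • fderiv ℝ (P σ) y₀ :=
        fderiv_const_mul (hPd σ) _
      simp [hP0 σ, hQ0 σ, hcP]
    rw [h1]
    simp only [ContinuousLinearMap.coe_smul', Pi.smul_apply, h2, ContinuousLinearMap.coe_sum',
      Finset.sum_apply]
    rw [Finset.sum_congr rfl fun σ _ => h3 σ]
    simp
  -- conclude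
  have h0 : Rδ y₀ * fderiv ℝ F y₀ u = 0 := by
    rw [← hrhs, ← hfd, hlhs]
  have hR0 : Rδ y₀ = 0 := by
    rcases mul_eq_zero.1 h0 with h | h
    · exact h
    · exact absurd h hu'
  have : δ p v = 0 := by
    have h5 : localRep δ p (chartAt E p p) v = 0 := hR0
    rwa [localRep_center] at h5
  have : β' p v - β p v = 0 := this
  linarith
end
end

section
/- Let (α, β) be an encoded b-symplectic form on (M, Z) with defining function f. Then the pullback i*α is a nowhere-vanishing 1-form on Z: (i*α)_p ≠ 0 for every p ∈ Z. -/
open Set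
open scoped Manifold Topology

noncomputable section

universe u v

section Aux

variable {E : Type u} [NormedAddCommGroup E] [NormedSpace ℝ E]
variable {M : Type v} [TopologicalSpace M] [ChartedSpace E M]

lemma sum_neg_comp' {α : Type*} [Fintype α] [DecidableEq α] (s : Equiv.Perm α)
    (G : Equiv.Perm α → ℝ) (h : ∀ σ, G (σ * s) = - G σ) : ∑ σ, G σ = 0 := by
  have h1 : ∑ σ, G (σ * s) = ∑ σ, G σ := Equiv.sum_comp (Equiv.mulRight s) G
  simp only [h, Finset.sum_neg_distrib] at h1
  linarith

omit [NormedAddCommGroup E] [NormedSpace ℝ E] in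
lemma wedge_smul_left' {k l : ℕ} (c : ℝ) (a : (Fin k → E) → ℝ) (b : (Fin l → E) → ℝ)
    (v : Fin (k + l) → E) :
    wedgeRaw (fun w => c * a w) b v = c * wedgeRaw a b v := by
  simp only [wedgeRaw, Finset.mul_sum]
  exact Finset.sum_congr rfl fun σ _ => by ring

omit [NormedAddCommGroup E] [NormedSpace ℝ E] in
lemma key_wedge_zero {m : ℕ} (d : (Fin 1 → E) → ℝ) (W : (Fin m → E) → ℝ)
    (v : Fin (1 + m + 1) → E) :
    wedgeRaw (wedgeRaw d W) d v = 0 := by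
  simp only [wedgeRaw]
  set C1 : ℝ := (((Nat.factorial 1) * (Nat.factorial m) : ℕ) : ℝ)⁻¹ with hC1
  have main : ∑ σ : Equiv.Perm (Fin (1 + m + 1)),
      ((Equiv.Perm.sign σ : ℤ) : ℝ) *
        (C1 * ∑ τ : Equiv.Perm (Fin (1 + m)), ((Equiv.Perm.sign τ : ℤ) : ℝ) *
          d (fun i => v (σ (Fin.castAdd 1 (τ (Fin.castAdd m i)))))
          * W (fun j => v (σ (Fin.castAdd 1 (τ (Fin.natAdd 1 j)))))) *
        d (fun j => v (σ (Fin.natAdd (1 + m) j))) = 0 := by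
    have step : ∀ σ : Equiv.Perm (Fin (1 + m + 1)),
        ((Equiv.Perm.sign σ : ℤ) : ℝ) *
          (C1 * ∑ τ : Equiv.Perm (Fin (1 + m)), ((Equiv.Perm.sign τ : ℤ) : ℝ) *
            d (fun i => v (σ (Fin.castAdd 1 (τ (Fin.castAdd m i)))))
            * W (fun j => v (σ (Fin.castAdd 1 (τ (Fin.natAdd 1 j)))))) *
          d (fun j => v (σ (Fin.natAdd (1 + m) j)))
        = ∑ τ : Equiv.Perm (Fin (1 + m)),
            C1 * (((Equiv.Perm.sign σ : ℤ) : ℝ) * (((Equiv.Perm.sign τ : ℤ) : ℝ) *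
              d (fun i => v (σ (Fin.castAdd 1 (τ (Fin.castAdd m i)))))
              * W (fun j => v (σ (Fin.castAdd 1 (τ (Fin.natAdd 1 j))))))
              * d (fun j => v (σ (Fin.natAdd (1 + m) j)))) := by
      intro σ
      rw [Finset.mul_sum, Finset.mul_sum, Finset.sum_mul]
      exact Finset.sum_congr rfl fun τ _ => by ring
    rw [Finset.sum_congr rfl fun σ _ => step σ, Finset.sum_comm]
    refine Finset.sum_eq_zero fun τ _ => ?_
    set j1 : Fin (1 + m + 1) := Fin.castAdd 1 (τ (Fin.castAdd m 0)) with hj1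
    set j2 : Fin (1 + m + 1) := Fin.natAdd (1 + m) 0 with hj2
    have hne : j1 ≠ j2 := by
      have h1 : (j1 : ℕ) < 1 + m := (τ (Fin.castAdd m 0)).isLt
      have h2 : (j2 : ℕ) = 1 + m := by simp [hj2]
      intro hcontra; rw [hcontra, h2] at h1; omega
    apply sum_neg_comp' (Equiv.swap j1 j2)
    intro σ
    have hsign : ((Equiv.Perm.sign (σ * Equiv.swap j1 j2) : ℤ) : ℝ)
        = -((Equiv.Perm.sign σ : ℤ) : ℝ) := by
      rw [Equiv.Perm.sign_mul, Equiv.Perm.sign_swap hne]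
      push_cast; ring
    have hA1 : (fun i : Fin 1 => v ((σ * Equiv.swap j1 j2) (Fin.castAdd 1 (τ (Fin.castAdd m i)))))
        = fun j : Fin 1 => v (σ (Fin.natAdd (1 + m) j)) := by
      funext i
      rw [Subsingleton.elim i 0]
      simp only [Equiv.Perm.mul_apply]
      rw [show Fin.castAdd 1 (τ (Fin.castAdd m 0)) = j1 from rfl, Equiv.swap_apply_left]
    have hA3 : (fun j : Fin 1 => v ((σ * Equiv.swap j1 j2) (Fin.natAdd (1 + m) j)))
        = fun i : Fin 1 => v (σ (Fin.castAdd 1 (τ (Fin.castAdd m i)))) := by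
      funext i
      rw [Subsingleton.elim i 0]
      simp only [Equiv.Perm.mul_apply]
      rw [show Fin.natAdd (1 + m) (0 : Fin 1) = j2 from rfl, Equiv.swap_apply_right]
    have hA2 : (fun j : Fin m => v ((σ * Equiv.swap j1 j2) (Fin.castAdd 1 (τ (Fin.natAdd 1 j)))))
        = fun j : Fin m => v (σ (Fin.castAdd 1 (τ (Fin.natAdd 1 j)))) := by
      funext j
      simp only [Equiv.Perm.mul_apply]
      congr 1
      congr 1
      apply Equiv.swap_apply_of_ne_of_ne
      · intro hc
        have h4 : τ (Fin.natAdd 1 j) = τ (Fin.castAdd m 0) :=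
          Fin.castAdd_injective (1 + m) 1 (hc.trans hj1)
        have h5 := τ.injective h4
        have h6 : (Fin.natAdd 1 j : ℕ) = (Fin.castAdd m (0 : Fin 1) : ℕ) := by rw [h5]
        simp at h6
      · intro hc
        have h1 : (Fin.castAdd 1 (τ (Fin.natAdd 1 j)) : ℕ) < 1 + m := (τ (Fin.natAdd 1 j)).isLt
        have h2 : ((j2 : Fin (1+m+1)) : ℕ) = 1 + m := by simp [hj2]
        rw [hc, h2] at h1; omega
    rw [hsign, hA1, hA2, hA3]
    ring
  rw [main, mul_zero]

lemma d0_eq_fderiv (f : M → ℝ) (p : M) (v : Fin 1 → E) :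
    d0 (E := E) f p v
      = fderiv ℝ (fun y => f ((chartAt E p).symm y)) (chartAt E p p) (v 0) := by
  simp [d0, extD, localRep, Fin.sum_univ_one]

end Aux

/-- For an encoded b-symplectic form `(α, β)` on `(M, Z)` with defining function
`f`, the pullback `i*α` is nowhere vanishing on `Z`: at each `p ∈ Z` there is a vector tangent
to `Z` on which `α_p` does not vanish. -/
theorem statement4
    {n : ℕ} (hn : 0 < n)
    {M : Type v} [TopologicalSpace M]
    [ChartedSpace (EuclideanSpace ℝ (Fin (2 * n))) M]
    [IsManifold 𝓘(ℝ, EuclideanSpace ℝ (Fin (2 * n))) (⊤ : ℕ∞) M] [T2Space M]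
    (f : M → ℝ) (hf : IsDefining (E := EuclideanSpace ℝ (Fin (2 * n))) f)
    (α : M → (Fin 1 → EuclideanSpace ℝ (Fin (2 * n))) → ℝ)
    (β : M → (Fin 2 → EuclideanSpace ℝ (Fin (2 * n))) → ℝ)
    (h : EncBSymp n f α β) :
    ∀ p, f p = 0 → ∃ u : EuclideanSpace ℝ (Fin (2 * n)),
      TangentTo f p u ∧ α p (fun _ => u) ≠ 0 := by
  intro p hp
  by_contra hcon
  push_neg at hcon
  set φ : EuclideanSpace ℝ (Fin (2 * n)) →L[ℝ] ℝ :=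
    fderiv ℝ (fun y => f ((chartAt (EuclideanSpace ℝ (Fin (2 * n))) p).symm y))
      (chartAt (EuclideanSpace ℝ (Fin (2 * n))) p p) with hφ
  have hd0 : ∀ v : Fin 1 → EuclideanSpace ℝ (Fin (2 * n)),
      d0 (E := EuclideanSpace ℝ (Fin (2 * n))) f p v = φ (v 0) := fun v => d0_eq_fderiv f p v
  obtain ⟨u₀, hu₀⟩ := hf.2 p hp
  have hφu₀ : φ u₀ ≠ 0 := by rw [hd0] at hu₀; exact hu₀
  obtain ⟨A, hA⟩ := h.1.1 p (mem_univ p)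
  have hupd : ∀ z : EuclideanSpace ℝ (Fin (2 * n)),
      (fun _ : Fin 1 => z)
        = Function.update (fun _ : Fin 1 => (0 : EuclideanSpace ℝ (Fin (2 * n)))) 0 z := by
    intro z; funext i; rw [Subsingleton.elim i 0]; simp
  have hadd : ∀ x y : EuclideanSpace ℝ (Fin (2 * n)),
      α p (fun _ => x + y) = α p (fun _ => x) + α p (fun _ => y) := by
    intro x y
    rw [← hA, hupd (x + y), hupd x, hupd y]
    exact A.map_update_add _ 0 x y
  have hsmul : ∀ (t : ℝ) (x : EuclideanSpace ℝ (Fin (2 * n))),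
      α p (fun _ => t • x) = t * α p (fun _ => x) := by
    intro t x
    rw [← hA, hupd (t • x), hupd x]
    exact A.map_update_smul _ 0 t x
  set c : ℝ := α p (fun _ => u₀) / φ u₀ with hc
  have claim : ∀ g : Fin 1 → EuclideanSpace ℝ (Fin (2 * n)),
      α p g = c * d0 (E := EuclideanSpace ℝ (Fin (2 * n))) f p g := by
    intro g
    have hg : g = fun _ => g 0 := funext fun i => by rw [Subsingleton.elim i 0]
    set u := g 0 with hu
    set t : ℝ := φ u / φ u₀ with ht
    have hker : d0 (E := EuclideanSpace ℝ (Fin (2 * n))) f p (fun _ => u - t • u₀) = 0 := by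
      rw [hd0]
      simp only [map_sub, map_smul, smul_eq_mul, ht]
      field_simp
      ring
    have hzero : α p (fun _ => u - t • u₀) = 0 := hcon (u - t • u₀) hker
    have hdecomp : α p (fun _ => u)
        = α p (fun _ => u - t • u₀) + t * α p (fun _ => u₀) := by
      rw [← hsmul t u₀, ← hadd]
      congr 1
      funext i
      module
    rw [hg, hd0, hdecomp, hzero, zero_add, hc, ht]
    field_simp
  have hαeq : α p = fun g => c * d0 (E := EuclideanSpace ℝ (Fin (2 * n))) f p g := funext claim
  obtain ⟨v, hv⟩ := h.2.2.2.2 p hp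
  apply hv
  rw [hαeq]
  have hinner : wedgeRaw (fun g => c * d0 (E := EuclideanSpace ℝ (Fin (2 * n))) f p g)
        (wpow (β p) (n - 1))
      = fun w => c * wedgeRaw (d0 (E := EuclideanSpace ℝ (Fin (2 * n))) f p)
          (wpow (β p) (n - 1)) w :=
    funext fun w => wedge_smul_left' c _ _ w
  rw [hinner, wedge_smul_left', key_wedge_zero, mul_zero]
end
end
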